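/- arXiv:1802.06142 — 4 statements merged into one kernel-verified Lean document; each statement's English description precedes it below -/
import Mathlib

section
/- Let q ∈ (0,1) and let X ⊆ [0,∞) be a nonempty closed set with qX = X. Then there exists a σ-finite q-invariant Borel measure μ on [0,∞) whose support equals X; that is, μ([0,∞) \ X) = 0 and μ(U) > 0 for every open set U ⊆ [0,∞) with U ∩ X ≠ ∅. -/
/-!
Take a countable dense subset `T` of `X` and saturate it under the powers `q ^ n`, `n : ℤ`:
the resulting countable set `S ⊆ X` is still dense in `X` and satisfies `q • S = S`. Counting
measure restricted to `S` is then the required measure: it is σ-finite because `S` is countable,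
it is `q`-invariant because `x ↦ q x` maps `S ∩ M` bijectively onto `S ∩ q M`, and an open set
has positive measure exactly when it meets `S`, i.e. when it meets `X`.
-/

open MeasureTheory Set Pointwise

section DenseSubset

variable {G α : Type*} [Group G] [MulAction G α]

theorem zpow_smul_set_eq {a : G} {X : Set α} (haX : a • X = X) (n : ℤ) : (a ^ n) • X = X :=
  MulAction.mem_stabilizer_iff.mp <|
    Subgroup.zpow_mem _ (MulAction.mem_stabilizer_iff.mpr haX) n

theorem TopologicalSpace.IsSeparable.exists_countable_dense_subset_smul_eq
    [TopologicalSpace α] [TopologicalSpace.PseudoMetrizableSpace α] {X : Set α}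
    (hX : TopologicalSpace.IsSeparable X) {a : G} (haX : a • X = X) :
    ∃ S ⊆ X, S.Countable ∧ X ⊆ closure S ∧ a • S = S := by
  obtain ⟨T, hTX, hTc, hXT⟩ := hX.exists_countable_dense_subset
  refine ⟨⋃ n : ℤ, (a ^ n) • T, ?_, countable_iUnion fun n => hTc.image _, ?_, ?_⟩
  · exact iUnion_subset fun n => (smul_set_mono hTX).trans (zpow_smul_set_eq haX n).subset
  · exact hXT.trans <| closure_mono <| subset_iUnion_of_subset 0 (by simp)
  · simp only [smul_set_iUnion, smul_smul, ← zpow_one_add]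
    exact (Equiv.addLeft 1).surjective.iUnion_comp fun n => (a ^ n) • T

end DenseSubset

namespace MeasureTheory.Measure

variable {α : Type*} [MeasurableSpace α] {S : Set α}

theorem sigmaFinite_count_restrict [MeasurableSingletonClass α] (hS : S.Countable) :
    SigmaFinite (count.restrict S) := by
  refine sigmaFinite_of_countable (S := insert Sᶜ ((fun a => {a}) '' S))
    ((hS.image _).insert _) ?_ ?_
  · rintro s (rfl | ⟨a, -, rfl⟩)
    · simp [restrict_apply' hS.measurableSet]
    · exact (restrict_le_self _).trans_lt (by simp)
  · rw [sUnion_insert, sUnion_image, biUnion_of_singleton, compl_union_self]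

theorem count_restrict_eq_zero_iff (hS : MeasurableSet S) {A : Set α} :
    count.restrict S A = 0 ↔ Disjoint A S := by
  rw [restrict_apply_eq_zero' hS, count_eq_zero_iff, disjoint_iff_inter_eq_empty]

theorem count_restrict_smul_set [MeasurableSingletonClass α] {G : Type*} [Group G]
    [MulAction G α] (hS : MeasurableSet S) {g : G} (hgS : g • S = S)
    (M : Set α) : count.restrict S (g • M) = count.restrict S M := by
  rw [restrict_apply' hS, restrict_apply' hS, ← hgS, ← smul_set_inter, ← image_smul,
    count_injective_image (MulAction.injective g), hgS]

end MeasureTheory.Measure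

theorem exists_qInvariant_measure_support_eq_general
    (q : ℝ) (hq0 : 0 < q)
    (X : Set ℝ) (hX0 : X ⊆ Set.Ici 0)
    (hXinv : q • X = X) :
    ∃ μ : Measure ℝ, SigmaFinite μ ∧ μ (Set.Iio 0) = 0 ∧
      (∀ M : Set ℝ, MeasurableSet M → M ⊆ Set.Ici 0 → μ (q • M) = μ M) ∧
      μ (Set.Ici 0 \ X) = 0 ∧
      ∀ U : Set ℝ, IsOpen U → (U ∩ X).Nonempty → 0 < μ U := by
  obtain ⟨S, hSX, hSc, hXS, hSinv⟩ :=
    (TopologicalSpace.IsSeparable.of_separableSpace X).exists_countable_dense_subset_smul_eq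
      (a := Units.mk0 q hq0.ne') hXinv
  have hS := hSc.measurableSet
  refine ⟨Measure.count.restrict S, Measure.sigmaFinite_count_restrict hSc, ?_,
    fun M _ _ => Measure.count_restrict_smul_set hS hSinv M, ?_, fun U hU hUX => ?_⟩
  · exact (Measure.count_restrict_eq_zero_iff hS).2 <|
      (Iio_disjoint_Ici le_rfl).mono_right (hSX.trans hX0)
  · exact (Measure.count_restrict_eq_zero_iff hS).2 (disjoint_sdiff_left.mono_right hSX)
  · rw [pos_iff_ne_zero, Ne, Measure.count_restrict_eq_zero_iff hS,
      not_disjoint_iff_nonempty_inter, inter_comm]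
    exact (closure_inter_open_nonempty_iff hU).1 <| hUX.mono fun x hx => ⟨hXS hx.2, hx.1⟩

/-- For every nonempty closed `q`-invariant subset `X` of `[0,∞)` there exists a σ-finite
`q`-invariant Borel measure on `[0,∞)` (modelled as a measure on `ℝ` vanishing on `(-∞,0)`)
whose support is exactly `X`. -/
theorem exists_qInvariant_measure_support_eq
    (q : ℝ) (hq0 : 0 < q) (hq1 : q < 1)
    (X : Set ℝ) (hX0 : X ⊆ Set.Ici 0) (hXcl : IsClosed X)
    (hXne : X.Nonempty) (hXinv : q • X = X) :
    ∃ μ : Measure ℝ, SigmaFinite μ ∧ μ (Set.Iio 0) = 0 ∧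
      (∀ M : Set ℝ, MeasurableSet M → M ⊆ Set.Ici 0 → μ (q • M) = μ M) ∧
      μ (Set.Ici 0 \ X) = 0 ∧
      ∀ U : Set ℝ, IsOpen U → (U ∩ X).Nonempty → 0 < μ U :=
  exists_qInvariant_measure_support_eq_general q hq0 X hX0 hXinv
end

section
/- Let q ∈ (0,1), let μ be a q-invariant Borel measure on [0,∞), and let ζ be the model operator on L²([0,∞), μ; ℂ) with domain D(ζ) = {f ∈ L² : ∫ x² |f(x)|² dμ(x) < ∞} and (ζ f)(x) = q x f(qx). Then the adjoint ζ* of ζ is the operator with the same domain D(ζ* ) = {g ∈ L² : ∫ x² |g(x)|² dμ(x) < ∞} given by (ζ* g)(x) = x g(q⁻¹ x). -/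
/-! The hypotheses on `μ` make `x ↦ q x` measure preserving, so the substitution `y = q x` turns
`⟪g, ζ f⟫ = ∫ conj (g x) q x f(q x) dμ` into `∫ conj (y g(q⁻¹ y)) f(y) dμ`. Hence every `g` with
`x g(q⁻¹ x) ∈ L²`, equivalently `x g(x) ∈ L²`, lies in the domain of `ζ*`. Conversely, for
`g ∈ D(ζ*)` the same identity makes `ζ* g - x g(q⁻¹ x)` orthogonal to every `L²` function supported
in `[-n, n]`; all of these lie in `D(ζ)`, and testing against the truncation of `ζ* g - x g(q⁻¹ x)`
itself shows that it vanishes on every `[-n, n]`. -/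

open MeasureTheory Set Pointwise ComplexConjugate

lemma measurePreserving_const_mul_of_smul_invariant {q : ℝ} (hq : 0 < q) {μ : Measure ℝ}
    (hneg : μ (Iio 0) = 0)
    (hinv : ∀ M : Set ℝ, MeasurableSet M → M ⊆ Ici 0 → μ (q • M) = μ M) :
    MeasurePreserving (q * ·) μ μ := by
  refine ⟨measurable_const_mul q, Measure.ext fun s hs => ?_⟩
  have hnull : μ (Ici 0)ᶜ = 0 := by rwa [compl_Ici]
  have himage : q • ((q * ·) ⁻¹' s ∩ Ici 0) = s ∩ Ici (0 : ℝ) := by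
    rw [smul_set_inter₀ hq.ne', LinearOrderedField.smul_Ici hq, mul_zero,
      ← preimage_smul_inv₀ hq.ne']
    ext x
    simp [hq.ne']
  rw [Measure.map_apply (measurable_const_mul q) hs]
  calc μ ((q * ·) ⁻¹' s) = μ ((q * ·) ⁻¹' s ∩ Ici 0) := (measure_inter_conull hnull).symm
    _ = μ (s ∩ Ici 0) := by
      rw [← himage, hinv _ ((measurable_const_mul q hs).inter measurableSet_Ici) inter_subset_right]
    _ = μ s := measure_inter_conull hnull

lemma indicator_ae_eq_zero_of_forall_inner_eq_zero {α 𝕜 : Type*} [MeasurableSpace α] [RCLike 𝕜]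
    {μ : Measure α} {u : Lp 𝕜 2 μ} {s : Set α} (hs : MeasurableSet s)
    (h : ∀ f : Lp 𝕜 2 μ, (f : α → 𝕜) =ᵐ[μ] s.indicator f → inner 𝕜 u f = 0) :
    s.indicator u =ᵐ[μ] 0 := by
  have hmem : MemLp (s.indicator u) 2 μ := (Lp.memLp u).indicator hs
  have hcoe := hmem.coeFn_toLp
  have hself : inner 𝕜 (hmem.toLp _) (hmem.toLp _) = inner 𝕜 u (hmem.toLp _) := by
    rw [L2.inner_def, L2.inner_def]
    refine integral_congr_ae ?_
    filter_upwards [hcoe] with x hx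
    by_cases hxs : x ∈ s <;> simp [hx, hxs]
  have hzero : hmem.toLp _ = 0 := by
    refine inner_self_eq_zero.mp (hself.trans (h _ ?_))
    filter_upwards [hcoe] with x hx
    by_cases hxs : x ∈ s <;> simp [hx, hxs]
  filter_upwards [hcoe, Lp.coeFn_zero 𝕜 2 μ] with x hx h0
  rw [← hx, hzero, h0]

variable {μ : Measure ℝ}

lemma memLp_two_ofReal_mul_iff {f : ℝ → ℂ} (hf : AEStronglyMeasurable f μ) :
    MemLp (fun x : ℝ => (x : ℂ) * f x) 2 μ ↔ ∫⁻ x, ENNReal.ofReal (x ^ 2 * ‖f x‖ ^ 2) ∂μ < ⊤ := by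
  have hmeas : AEStronglyMeasurable (fun x : ℝ => (x : ℂ) * f x) μ := by fun_prop
  rw [memLp_two_iff_integrable_sq_norm hmeas, Integrable, and_iff_right (by fun_prop),
    hasFiniteIntegral_iff_ofReal (.of_forall fun x => by positivity)]
  simp only [norm_mul, Complex.norm_real, Real.norm_eq_abs, mul_pow, sq_abs]

lemma memLp_indicator_closedBall_mul {p : ENNReal} {f : ℝ → ℂ} (hf : MemLp f p μ) (n : ℕ) :
    MemLp ((Metric.closedBall 0 n).indicator fun x : ℝ => (x : ℂ) * f x) p μ := by
  have := hf.aestronglyMeasurable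
  refine hf.of_le_mul (c := n)
    ((by fun_prop : AEStronglyMeasurable _ μ).indicator Metric.isClosed_closedBall.measurableSet)
    (.of_forall fun x => ?_)
  by_cases hx : x ∈ Metric.closedBall 0 (n : ℝ)
  · rw [indicator_of_mem hx, norm_mul, Complex.norm_real]
    exact mul_le_mul_of_nonneg_right (mem_closedBall_zero_iff.mp hx) (norm_nonneg _)
  · rw [indicator_of_notMem hx, norm_zero]
    positivity

noncomputable def modelAdjointFun (c : ℝ) (g : ℝ → ℂ) (x : ℝ) : ℂ := x * g (c⁻¹ * x)

variable {c : ℝ}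

lemma memLp_modelAdjointFun_iff (hc : c ≠ 0) (hμ : MeasurePreserving (c * ·) μ μ)
    {g : ℝ → ℂ} :
    MemLp (modelAdjointFun c g) 2 μ ↔ MemLp (fun x : ℝ => (x : ℂ) * g x) 2 μ := by
  have hmap := (measurableEmbedding_mulLeft₀ hc).memLp_map_measure_iff
    (g := modelAdjointFun c g) (μ := μ) (p := 2)
  rw [hμ.map_eq] at hmap
  have hcomp : modelAdjointFun c g ∘ (c * ·) = fun x : ℝ => (c : ℂ) * ((x : ℂ) * g x) := by
    ext x
    simp [modelAdjointFun, inv_mul_cancel_left₀ hc, mul_assoc]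
  rw [hmap, hcomp]
  exact ⟨fun h => by simpa [hc] using h.const_mul (c⁻¹ : ℂ), fun h => h.const_mul _⟩

lemma integral_conj_mul_const_mul_comp (hc : c ≠ 0) (hμ : MeasurePreserving (c * ·) μ μ)
    (g f : ℝ → ℂ) :
    ∫ x, conj (g x) * (((c * x : ℝ) : ℂ) * f (c * x)) ∂μ
      = ∫ x, conj (modelAdjointFun c g x) * f x ∂μ := by
  rw [← hμ.integral_comp (measurableEmbedding_mulLeft₀ hc)
    (fun x => conj (modelAdjointFun c g x) * f x)]
  congr 1 with x
  simp only [modelAdjointFun, inv_mul_cancel_left₀ hc, map_mul, Complex.conj_ofReal]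
  ring

structure IsModelOperator (μ : Measure ℝ) (c : ℝ) (ζ : Lp ℂ 2 μ →ₗ.[ℂ] Lp ℂ 2 μ) : Prop where
  mem_domain_iff : ∀ f : Lp ℂ 2 μ, f ∈ ζ.domain ↔ MemLp (fun x : ℝ => (x : ℂ) * f x) 2 μ
  apply_ae_eq : ∀ f : ζ.domain,
    (ζ f : ℝ → ℂ) =ᵐ[μ] fun x => ((c * x : ℝ) : ℂ) * (f : Lp ℂ 2 μ) (c * x)

namespace IsModelOperator

variable {ζ : Lp ℂ 2 μ →ₗ.[ℂ] Lp ℂ 2 μ}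

lemma inner_apply_eq_integral (hc : c ≠ 0) (hμ : MeasurePreserving (c * ·) μ μ)
    (hζ : IsModelOperator μ c ζ) (g : Lp ℂ 2 μ) (f : ζ.domain) :
    inner ℂ g (ζ f) = ∫ x, conj (modelAdjointFun c g x) * (f : Lp ℂ 2 μ) x ∂μ := by
  rw [L2.inner_def, ← integral_conj_mul_const_mul_comp hc hμ]
  refine integral_congr_ae ?_
  filter_upwards [hζ.apply_ae_eq f] with x hx
  rw [RCLike.inner_apply', hx]

lemma mem_adjoint_domain (hc : c ≠ 0) (hμ : MeasurePreserving (c * ·) μ μ)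
    (hζ : IsModelOperator μ c ζ) {g : Lp ℂ 2 μ} (hg : MemLp (modelAdjointFun c g) 2 μ) :
    g ∈ ζ.adjoint.domain := by
  refine LinearPMap.mem_adjoint_domain_of_exists _ ⟨hg.toLp _, fun f => ?_⟩
  rw [hζ.inner_apply_eq_integral hc hμ, L2.inner_def]
  refine integral_congr_ae ?_
  filter_upwards [hg.coeFn_toLp] with x hx
  rw [RCLike.inner_apply', hx]

lemma adjoint_apply_ae_eq_on_closedBall (hc : c ≠ 0) (hμ : MeasurePreserving (c * ·) μ μ)
    (hdense : Dense (ζ.domain : Set (Lp ℂ 2 μ))) (hζ : IsModelOperator μ c ζ)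
    (g : ζ.adjoint.domain) (n : ℕ) :
    ∀ᵐ x ∂μ, x ∈ Metric.closedBall 0 (n : ℝ) →
      (ζ.adjoint g : ℝ → ℂ) x = modelAdjointFun c g x := by
  set s := Metric.closedBall (0 : ℝ) n
  have hμinv : MeasurePreserving (c⁻¹ * ·) μ μ := by
    simpa using (MeasurePreserving.symm (MeasurableEquiv.mulLeft₀ c hc) hμ)
  have hV : MemLp (s.indicator (modelAdjointFun c g)) 2 μ :=
    memLp_indicator_closedBall_mul ((Lp.memLp (g : Lp ℂ 2 μ)).comp_measurePreserving hμinv) n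
  have hvanish : s.indicator ⇑(ζ.adjoint g - hV.toLp _) =ᵐ[μ] 0 := by
    refine indicator_ae_eq_zero_of_forall_inner_eq_zero measurableSet_closedBall fun f hf => ?_
    have hfdom : f ∈ ζ.domain := by
      refine (hζ.mem_domain_iff f).mpr ((memLp_indicator_closedBall_mul (Lp.memLp f) n).ae_eq ?_)
      filter_upwards [hf] with x hx
      by_cases hxs : x ∈ s
      · rw [indicator_of_mem hxs]
      · rw [indicator_of_notMem hxs, hx, indicator_of_notMem hxs, mul_zero]
    rw [inner_sub_left, LinearPMap.adjoint_isFormalAdjoint hdense g ⟨f, hfdom⟩,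
      hζ.inner_apply_eq_integral hc hμ, L2.inner_def, sub_eq_zero]
    refine integral_congr_ae ?_
    filter_upwards [hf, hV.coeFn_toLp] with x hx hVx
    rw [RCLike.inner_apply', hVx]
    by_cases hxs : x ∈ s
    · rw [indicator_of_mem hxs]
    · rw [indicator_of_notMem hxs, hx, indicator_of_notMem hxs, mul_zero, mul_zero]
  filter_upwards [hvanish, Lp.coeFn_sub (ζ.adjoint g) (hV.toLp _), hV.coeFn_toLp]
    with x hx hsub hVx hxs
  rw [indicator_of_mem hxs, hsub, Pi.sub_apply, hVx, indicator_of_mem hxs] at hx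
  exact sub_eq_zero.mp hx

lemma adjoint_apply_ae_eq (hc : c ≠ 0) (hμ : MeasurePreserving (c * ·) μ μ)
    (hdense : Dense (ζ.domain : Set (Lp ℂ 2 μ))) (hζ : IsModelOperator μ c ζ)
    (g : ζ.adjoint.domain) :
    (ζ.adjoint g : ℝ → ℂ) =ᵐ[μ] modelAdjointFun c g := by
  filter_upwards [ae_all_iff.mpr (hζ.adjoint_apply_ae_eq_on_closedBall hc hμ hdense g)] with x hx
  exact hx ⌈|x|⌉₊ (mem_closedBall_zero_iff.mpr (Nat.le_ceil _))

end IsModelOperator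

theorem qNormal_model_adjoint_general
    (q : ℝ) (hq0 : 0 < q)
    (μ : Measure ℝ) (hμneg : μ (Set.Iio 0) = 0)
    (hμinv : ∀ M : Set ℝ, MeasurableSet M → M ⊆ Set.Ici 0 → μ (q • M) = μ M)
    (ζ : Lp ℂ 2 μ →ₗ.[ℂ] Lp ℂ 2 μ)
    (hdense : Dense (ζ.domain : Set (Lp ℂ 2 μ)))
    (hdom : ∀ f : Lp ℂ 2 μ,
      f ∈ ζ.domain ↔ ∫⁻ x, ENNReal.ofReal (x ^ 2 * ‖f x‖ ^ 2) ∂μ < ⊤)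
    (hact : ∀ f : ζ.domain,
      (ζ f : ℝ → ℂ) =ᵐ[μ] fun x => ((q * x : ℝ) : ℂ) * (f : Lp ℂ 2 μ) (q * x)) :
    (∀ g : Lp ℂ 2 μ,
      g ∈ ζ.adjoint.domain ↔ ∫⁻ x, ENNReal.ofReal (x ^ 2 * ‖g x‖ ^ 2) ∂μ < ⊤) ∧
    (∀ g : ζ.adjoint.domain,
      (ζ.adjoint g : ℝ → ℂ) =ᵐ[μ] fun x => (x : ℂ) * (g : Lp ℂ 2 μ) (q⁻¹ * x)) := by
  have hμ := measurePreserving_const_mul_of_smul_invariant hq0 hμneg hμinv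
  have hζ : IsModelOperator μ q ζ :=
    ⟨fun f => (hdom f).trans (memLp_two_ofReal_mul_iff (Lp.aestronglyMeasurable f)).symm, hact⟩
  have hadj := hζ.adjoint_apply_ae_eq hq0.ne' hμ hdense
  refine ⟨fun g => ?_, hadj⟩
  rw [← memLp_two_ofReal_mul_iff (Lp.aestronglyMeasurable g),
    ← memLp_modelAdjointFun_iff hq0.ne' hμ]
  exact ⟨fun hg => (Lp.memLp _).ae_eq (hadj ⟨g, hg⟩), hζ.mem_adjoint_domain hq0.ne' hμ⟩

/-- The adjoint of the model operator `(ζ f)(x) = q x f(qx)` on `L²([0,∞), μ; ℂ)` with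
domain `{f : ∫ x²|f|² dμ < ∞}` has the same domain and acts by `(ζ* g)(x) = x g(q⁻¹ x)`. -/
theorem qNormal_model_adjoint
    (q : ℝ) (hq0 : 0 < q) (hq1 : q < 1)
    (μ : Measure ℝ) (hμneg : μ (Set.Iio 0) = 0)
    (hμinv : ∀ M : Set ℝ, MeasurableSet M → M ⊆ Set.Ici 0 → μ (q • M) = μ M)
    (ζ : Lp ℂ 2 μ →ₗ.[ℂ] Lp ℂ 2 μ)
    (hdense : Dense (ζ.domain : Set (Lp ℂ 2 μ)))
    (hdom : ∀ f : Lp ℂ 2 μ,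
      f ∈ ζ.domain ↔ ∫⁻ x, ENNReal.ofReal (x ^ 2 * ‖f x‖ ^ 2) ∂μ < ⊤)
    (hact : ∀ f : ζ.domain,
      (ζ f : ℝ → ℂ) =ᵐ[μ] fun x => ((q * x : ℝ) : ℂ) * (f : Lp ℂ 2 μ) (q * x)) :
    (∀ g : Lp ℂ 2 μ,
      g ∈ ζ.adjoint.domain ↔ ∫⁻ x, ENNReal.ofReal (x ^ 2 * ‖g x‖ ^ 2) ∂μ < ⊤) ∧
    (∀ g : ζ.adjoint.domain,
      (ζ.adjoint g : ℝ → ℂ) =ᵐ[μ] fun x => (x : ℂ) * (g : Lp ℂ 2 μ) (q⁻¹ * x)) :=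
  qNormal_model_adjoint_general q hq0 μ hμneg hμinv ζ hdense hdom hact
end

section
/- Let q ∈ (0,1), let μ be a q-invariant Borel measure on [0,∞), and let ζ be the model operator on L²([0,∞), μ; ℂ) with domain D(ζ) = {f ∈ L² : ∫ x² |f(x)|² dμ(x) < ∞} and (ζ f)(x) = q x f(qx). Then ζ is a closed operator and satisfies the q-normality relation ζ ζ* = q² ζ* ζ as an equality of unbounded operators; in particular the domains coincide: D(ζ ζ*) = D(ζ* ζ) = {f ∈ L² : ∫ x⁴ |f(x)|² dμ(x) < ∞}, and on this common domain ζ(ζ* f) = q² ζ*(ζ f). -/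
/-!
Since `μ` is carried by `[0, ∞)` and `q`-invariant, `x ↦ q x` preserves `μ`. Whenever `x ↦ b x`
preserves `μ` (`b ≠ 0`), the adjoint of the maximal operator `f ↦ c x f(b x)` on
`{f : x f ∈ L²}` is `g ↦ c b⁻¹ x g(b⁻¹ x)` on the same domain: one inclusion is the substitution
`x ↦ b⁻¹ x`, and for the other one tests the adjoint against truncations `1_{|x| ≤ n} u`, which
lie in the domain. Applying this twice gives `ζ** = ζ`, so `ζ` is closed, and composing the two
explicit formulas gives `ζ ζ* = q² ζ* ζ` on `{f : x² f ∈ L²}`.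
-/

open MeasureTheory Set Pointwise
open scoped ComplexConjugate InnerProductSpace

variable {μ : Measure ℝ}

lemma measurePreserving_inv_mul_left {b : ℝ} (hb : b ≠ 0)
    (h : MeasurePreserving (b * ·) μ μ) : MeasurePreserving (b⁻¹ * ·) μ μ := by
  have h' : MeasurePreserving (Homeomorph.mulLeft₀ b hb).toMeasurableEquiv μ μ := h
  simpa using h'.symm

lemma measurePreserving_inv_mul_left_of_smul_invariant {q : ℝ} (hq : 0 < q)
    (hμneg : μ (Iio 0) = 0)
    (hμinv : ∀ M : Set ℝ, MeasurableSet M → M ⊆ Ici 0 → μ (q • M) = μ M) :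
    MeasurePreserving (q⁻¹ * ·) μ μ := by
  refine ⟨measurable_const_mul _, Measure.ext fun s hs => ?_⟩
  have hnull : μ (Ici (0 : ℝ))ᶜ = 0 := by rwa [compl_Ici]
  rw [Measure.map_apply (measurable_const_mul _) hs,
    show (q⁻¹ * ·) ⁻¹' s = q • s from preimage_smul_inv₀ hq.ne' s,
    ← measure_inter_conull (s := q • s) hnull, ← measure_inter_conull (s := s) hnull]
  calc μ (q • s ∩ Ici 0) = μ (q • (s ∩ Ici 0)) := by
        rw [smul_set_inter₀ hq.ne', LinearOrderedField.smul_Ici hq, mul_zero]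
    _ = μ (s ∩ Ici 0) := hμinv _ (hs.inter measurableSet_Ici) inter_subset_right

lemma memLp_comp_mul_left_iff {b : ℝ} (hb : b ≠ 0) (hμb : MeasurePreserving (b * ·) μ μ)
    {p : ENNReal} {g : ℝ → ℂ} : MemLp (fun x => g (b * x)) p μ ↔ MemLp g p μ := by
  refine ⟨fun h => ?_, fun h => h.comp_measurePreserving hμb⟩
  simpa [Function.comp_def, mul_inv_cancel_left₀ hb] using
    h.comp_measurePreserving (measurePreserving_inv_mul_left hb hμb)

lemma memLp_const_mul_iff {α : Type*} {m : MeasurableSpace α} {ν : Measure α} {p : ENNReal}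
    {c : ℂ} (hc : c ≠ 0) {g : α → ℂ} : MemLp (fun x => c * g x) p ν ↔ MemLp g p ν :=
  ⟨fun h => by simpa [inv_mul_cancel_left₀ hc] using h.const_mul c⁻¹, fun h => h.const_mul c⟩

lemma memLp_pow_mul_comp_mul_left_iff {b : ℝ} (hb : b ≠ 0)
    (hμb : MeasurePreserving (b * ·) μ μ) (k : ℕ) {p : ENNReal} {g : ℝ → ℂ} :
    MemLp (fun x : ℝ => (x : ℂ) ^ k * g (b * x)) p μ ↔
      MemLp (fun x : ℝ => (x : ℂ) ^ k * g x) p μ := by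
  have hb' : (b : ℂ) ≠ 0 := Complex.ofReal_ne_zero.mpr hb
  have h : (fun x : ℝ => (x : ℂ) ^ k * g (b * x)) =
      fun x => ((b : ℂ) ^ k)⁻¹ * (((b * x : ℝ) : ℂ) ^ k * g (b * x)) := by
    funext x
    push_cast
    rw [mul_pow, mul_assoc, inv_mul_cancel_left₀ (pow_ne_zero k hb')]
  rw [h, memLp_const_mul_iff (inv_ne_zero (pow_ne_zero k hb')),
    memLp_comp_mul_left_iff hb hμb (g := fun y : ℝ => (y : ℂ) ^ k * g y)]

lemma memLp_id_mul_of_memLp_sq_mul {p : ENNReal} {f : ℝ → ℂ} (hf : MemLp f p μ)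
    (hf₂ : MemLp (fun x : ℝ => (x : ℂ) ^ 2 * f x) p μ) :
    MemLp (fun x : ℝ => (x : ℂ) * f x) p μ := by
  refine (hf.norm.add hf₂.norm).of_le
    (Complex.continuous_ofReal.aestronglyMeasurable.mul hf.1) (ae_of_all _ fun x => ?_)
  have hx : |x| ≤ 1 + x ^ 2 := by nlinarith [sq_nonneg (|x| - 1), sq_abs x, abs_nonneg x]
  rw [Pi.add_apply, norm_mul, norm_mul, norm_pow, Complex.norm_real, Real.norm_eq_abs,
    sq_abs, Real.norm_of_nonneg (by positivity)]
  nlinarith [norm_nonneg (f x)]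

lemma memLp_pow_mul_iff_lintegral_lt_top (f : Lp ℂ 2 μ) (k : ℕ) :
    MemLp (fun x : ℝ => (x : ℂ) ^ k * f x) 2 μ ↔
      ∫⁻ x, ENNReal.ofReal (x ^ (2 * k) * ‖f x‖ ^ 2) ∂μ < ⊤ := by
  have hmeas : AEStronglyMeasurable (fun x : ℝ => (x : ℂ) ^ k * f x) μ :=
    (by fun_prop : Continuous fun x : ℝ => (x : ℂ) ^ k).aestronglyMeasurable.mul
      (Lp.aestronglyMeasurable f)
  have hnorm (x : ℝ) : ‖(x : ℂ) ^ k * f x‖ ^ 2 = x ^ (2 * k) * ‖f x‖ ^ 2 := by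
    rw [norm_mul, norm_pow, Complex.norm_real, Real.norm_eq_abs, mul_pow, ← pow_mul,
      mul_comm k 2, pow_mul, pow_mul, sq_abs]
  rw [memLp_two_iff_integrable_sq_norm hmeas, Integrable, and_iff_right (by fun_prop),
    hasFiniteIntegral_iff_ofReal (ae_of_all _ fun x => by positivity)]
  simp only [hnorm]

lemma memLp_indicator_closedBall_id_mul {p : ENNReal} {u : ℝ → ℂ} (hu : MemLp u p μ)
    (r : ℝ) :
    MemLp ((Metric.closedBall 0 r).indicator fun x : ℝ => (x : ℂ) * u x) p μ := by
  refine (hu.const_mul (r : ℂ)).of_le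
    ((Complex.continuous_ofReal.aestronglyMeasurable.mul hu.1).indicator
      Metric.isClosed_closedBall.measurableSet) (ae_of_all _ fun x => ?_)
  by_cases hx : x ∈ Metric.closedBall 0 r
  · rw [indicator_of_mem hx, norm_mul, norm_mul, Complex.norm_real, Complex.norm_real]
    have hxr : ‖x‖ ≤ r := mem_closedBall_zero_iff.mp hx
    gcongr
    exact hxr.trans (Real.le_norm_self r)
  · rw [indicator_of_notMem hx, norm_zero]
    positivity

lemma ae_eq_of_forall_indicator_closedBall_ae_eq {E : Type*} [Zero E] {F G : ℝ → E}
    (h : ∀ n : ℕ,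
      (Metric.closedBall 0 n).indicator F =ᵐ[μ] (Metric.closedBall 0 n).indicator G) :
    F =ᵐ[μ] G := by
  filter_upwards [ae_all_iff.mpr h] with x hx
  obtain ⟨n, hn⟩ := exists_nat_ge ‖x‖
  have hmem : x ∈ Metric.closedBall (0 : ℝ) n := mem_closedBall_zero_iff.mpr hn
  simpa [indicator_of_mem hmem] using hx n

section L2

variable {α : Type*} {m : MeasurableSpace α} {ν : Measure α}

lemma inner_eq_integral_conj_mul (f g : Lp ℂ 2 ν) :
    ⟪f, g⟫_ℂ = ∫ x, conj (f x) * g x ∂ν := by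
  simp only [L2.inner_def, RCLike.inner_apply']

lemma integral_conj_indicator_mul (s : Set α) (F u : α → ℂ) :
    ∫ x, conj (s.indicator F x) * u x ∂ν = ∫ x, conj (F x) * s.indicator u x ∂ν := by
  congr 1
  funext x
  by_cases hx : x ∈ s <;> simp [hx]

lemma ae_eq_of_forall_integral_conj_mul_eq {F G : α → ℂ} (hF : MemLp F 2 ν)
    (hG : MemLp G 2 ν)
    (h : ∀ u : Lp ℂ 2 ν, ∫ x, conj (F x) * u x ∂ν = ∫ x, conj (G x) * u x ∂ν) :
    F =ᵐ[ν] G := by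
  have hinner (H : α → ℂ) (hH : MemLp H 2 ν) (u : Lp ℂ 2 ν) :
      ⟪hH.toLp H, u⟫_ℂ = ∫ x, conj (H x) * u x ∂ν := by
    rw [inner_eq_integral_conj_mul]
    refine integral_congr_ae ?_
    filter_upwards [hH.coeFn_toLp] with x hx
    rw [hx]
  refine (MemLp.toLp_eq_toLp_iff hF hG).mp (ext_inner_right ℂ fun u => ?_)
  rw [hinner F hF, hinner G hG, h]

end L2

def weightedDilation (b c : ℝ) (g : ℝ → ℂ) : ℝ → ℂ :=
  fun x => ((c * x : ℝ) : ℂ) * g (b * x)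

lemma memLp_weightedDilation_iff {b c : ℝ} (hb : b ≠ 0) (hc : c ≠ 0)
    (hμb : MeasurePreserving (b * ·) μ μ) {p : ENNReal} {g : ℝ → ℂ} :
    MemLp (weightedDilation b c g) p μ ↔ MemLp (fun x : ℝ => (x : ℂ) * g x) p μ := by
  have h : weightedDilation b c g = fun x : ℝ => (c : ℂ) * ((x : ℂ) ^ 1 * g (b * x)) := by
    funext x
    simp only [weightedDilation, pow_one, Complex.ofReal_mul, mul_assoc]
  rw [h, memLp_const_mul_iff (Complex.ofReal_ne_zero.mpr hc),
    memLp_pow_mul_comp_mul_left_iff hb hμb 1]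
  simp only [pow_one]

lemma memLp_indicator_closedBall_weightedDilation {b c : ℝ} {p : ENNReal} {g : ℝ → ℂ}
    (hg : MemLp (fun x => g (b * x)) p μ) (r : ℝ) :
    MemLp ((Metric.closedBall 0 r).indicator (weightedDilation b c g)) p μ := by
  convert (memLp_indicator_closedBall_id_mul hg r).const_mul (c : ℂ) using 1
  funext x
  by_cases hx : x ∈ Metric.closedBall 0 r
  · rw [indicator_of_mem hx, indicator_of_mem hx, weightedDilation]
    push_cast
    ring
  · rw [indicator_of_notMem hx, indicator_of_notMem hx, mul_zero]

structure IsWeightedDilation (μ : Measure ℝ) (A : Lp ℂ 2 μ →ₗ.[ℂ] Lp ℂ 2 μ) (b c : ℝ) : Prop where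
  mem_domain_iff : ∀ f : Lp ℂ 2 μ, f ∈ A.domain ↔ MemLp (fun x : ℝ => (x : ℂ) * f x) 2 μ
  apply_ae_eq : ∀ f : A.domain, ⇑(A f) =ᵐ[μ] weightedDilation b c (f : Lp ℂ 2 μ)

namespace IsWeightedDilation

variable {A B : Lp ℂ 2 μ →ₗ.[ℂ] Lp ℂ 2 μ} {b c b' c' : ℝ}

lemma domain_eq (hA : IsWeightedDilation μ A b c) (hB : IsWeightedDilation μ B b' c') :
    A.domain = B.domain := by
  ext f
  rw [hA.mem_domain_iff, hB.mem_domain_iff]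

lemma inner_apply_eq_integral (hA : IsWeightedDilation μ A b c) (hb : b ≠ 0)
    (hμb : MeasurePreserving (b * ·) μ μ) (g : Lp ℂ 2 μ) (f : A.domain) :
    ⟪g, A f⟫_ℂ = ∫ x, conj (weightedDilation b⁻¹ (c * b⁻¹) g x) * (f : Lp ℂ 2 μ) x ∂μ := by
  set F : ℝ → ℂ := fun x => conj (g x) * weightedDilation b c (f : Lp ℂ 2 μ) x
  calc ⟪g, A f⟫_ℂ = ∫ x, F x ∂μ := by
        rw [inner_eq_integral_conj_mul]
        refine integral_congr_ae ?_
        filter_upwards [hA.apply_ae_eq f] with x hx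
        rw [hx]
    _ = ∫ x, F (b⁻¹ * x) ∂μ :=
        ((measurePreserving_inv_mul_left hb hμb).integral_comp
          (measurableEmbedding_mulLeft₀ (inv_ne_zero hb)) F).symm
    _ = _ := by
        congr 1
        funext x
        simp only [F, weightedDilation, mul_inv_cancel_left₀ hb, map_mul, Complex.conj_ofReal]
        push_cast
        ring

lemma mem_adjoint_domain_of_memLp (hA : IsWeightedDilation μ A b c) (hb : b ≠ 0) (hc : c ≠ 0)
    (hμb : MeasurePreserving (b * ·) μ μ) (hdense : Dense (A.domain : Set (Lp ℂ 2 μ)))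
    {g : Lp ℂ 2 μ} (hg : MemLp (fun x : ℝ => (x : ℂ) * g x) 2 μ) :
    ∃ hg : g ∈ A.adjoint.domain,
      ⇑(A.adjoint ⟨g, hg⟩) =ᵐ[μ] weightedDilation b⁻¹ (c * b⁻¹) g := by
  have hw : MemLp (weightedDilation b⁻¹ (c * b⁻¹) g) 2 μ :=
    (memLp_weightedDilation_iff (inv_ne_zero hb) (mul_ne_zero hc (inv_ne_zero hb))
      (measurePreserving_inv_mul_left hb hμb)).mpr hg
  have hadj (f : A.domain) : ⟪hw.toLp _, (f : Lp ℂ 2 μ)⟫_ℂ = ⟪g, A f⟫_ℂ := by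
    rw [inner_eq_integral_conj_mul, hA.inner_apply_eq_integral hb hμb]
    refine integral_congr_ae ?_
    filter_upwards [hw.coeFn_toLp] with x hx
    rw [hx]
  have hg' : g ∈ A.adjoint.domain := LinearPMap.mem_adjoint_domain_of_exists _ ⟨_, hadj⟩
  refine ⟨hg', ?_⟩
  rw [LinearPMap.adjoint_apply_eq hdense ⟨g, hg'⟩ hadj]
  exact hw.coeFn_toLp

lemma adjoint_apply_ae_eq (hA : IsWeightedDilation μ A b c) (hb : b ≠ 0)
    (hμb : MeasurePreserving (b * ·) μ μ) (hdense : Dense (A.domain : Set (Lp ℂ 2 μ)))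
    (g : A.adjoint.domain) :
    ⇑(A.adjoint g) =ᵐ[μ] weightedDilation b⁻¹ (c * b⁻¹) (g : Lp ℂ 2 μ) := by
  refine ae_eq_of_forall_indicator_closedBall_ae_eq fun n => ?_
  set s := Metric.closedBall (0 : ℝ) n
  have hs : MeasurableSet s := Metric.isClosed_closedBall.measurableSet
  have hw : MemLp (s.indicator (weightedDilation b⁻¹ (c * b⁻¹) (g : Lp ℂ 2 μ))) 2 μ :=
    memLp_indicator_closedBall_weightedDilation
      ((memLp_comp_mul_left_iff (inv_ne_zero hb) (measurePreserving_inv_mul_left hb hμb)).mpr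
        (Lp.memLp _)) n
  refine ae_eq_of_forall_integral_conj_mul_eq ((Lp.memLp _).indicator hs) hw fun u => ?_
  set f : Lp ℂ 2 μ := ((Lp.memLp u).indicator hs).toLp _
  have hf : f ∈ A.domain := by
    rw [hA.mem_domain_iff]
    refine (memLp_indicator_closedBall_id_mul (Lp.memLp u) n).ae_eq ?_
    filter_upwards [((Lp.memLp u).indicator hs).coeFn_toLp] with x hx
    rw [hx, indicator_mul_right]
  have hintegral (F : ℝ → ℂ) :
      ∫ x, conj (F x) * f x ∂μ = ∫ x, conj (s.indicator F x) * u x ∂μ := by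
    rw [integral_conj_indicator_mul]
    refine integral_congr_ae ?_
    filter_upwards [((Lp.memLp u).indicator hs).coeFn_toLp] with x hx
    rw [hx]
  rw [← hintegral, ← hintegral, ← inner_eq_integral_conj_mul,
    LinearPMap.adjoint_isFormalAdjoint hdense g ⟨f, hf⟩,
    hA.inner_apply_eq_integral hb hμb]

theorem adjoint (hA : IsWeightedDilation μ A b c) (hb : b ≠ 0) (hc : c ≠ 0)
    (hμb : MeasurePreserving (b * ·) μ μ) (hdense : Dense (A.domain : Set (Lp ℂ 2 μ))) :
    IsWeightedDilation μ A.adjoint b⁻¹ (c * b⁻¹) where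
  mem_domain_iff g := by
    refine ⟨fun hg => ?_, fun hg => (hA.mem_adjoint_domain_of_memLp hb hc hμb hdense hg).1⟩
    refine (memLp_weightedDilation_iff (inv_ne_zero hb) (mul_ne_zero hc (inv_ne_zero hb))
      (measurePreserving_inv_mul_left hb hμb)).mp ?_
    exact (Lp.memLp _).ae_eq (hA.adjoint_apply_ae_eq hb hμb hdense ⟨g, hg⟩)
  apply_ae_eq := hA.adjoint_apply_ae_eq hb hμb hdense

theorem isClosed (hA : IsWeightedDilation μ A b c) (hb : b ≠ 0) (hc : c ≠ 0)
    (hμb : MeasurePreserving (b * ·) μ μ) (hdense : Dense (A.domain : Set (Lp ℂ 2 μ))) :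
    A.IsClosed := by
  have hA' := hA.adjoint hb hc hμb hdense
  have hdense' : Dense (A.adjoint.domain : Set (Lp ℂ 2 μ)) := by rwa [hA'.domain_eq hA]
  have hA'' := hA'.adjoint (inv_ne_zero hb) (mul_ne_zero hc (inv_ne_zero hb))
    (measurePreserving_inv_mul_left hb hμb) hdense'
  have hAA : A = A.adjoint.adjoint :=
    LinearPMap.eq_of_le_of_domain_eq
      ((LinearPMap.adjoint_isFormalAdjoint hdense).le_adjoint hdense') (hA.domain_eq hA'')
  rw [hAA]
  exact LinearPMap.adjoint_isClosed hdense'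

lemma memLp_id_mul_apply_iff (hA : IsWeightedDilation μ A b c) (hb : b ≠ 0) (hc : c ≠ 0)
    (hμb : MeasurePreserving (b * ·) μ μ) (f : A.domain) :
    MemLp (fun x : ℝ => (x : ℂ) * A f x) 2 μ ↔
      MemLp (fun x : ℝ => (x : ℂ) ^ 2 * (f : Lp ℂ 2 μ) x) 2 μ := by
  have h : (fun x : ℝ => (x : ℂ) * A f x) =ᵐ[μ]
      fun x : ℝ => (c : ℂ) * ((x : ℂ) ^ 2 * (f : Lp ℂ 2 μ) (b * x)) := by
    filter_upwards [hA.apply_ae_eq f] with x hx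
    rw [hx, weightedDilation]
    push_cast
    ring
  rw [memLp_congr_ae h, memLp_const_mul_iff (Complex.ofReal_ne_zero.mpr hc),
    memLp_pow_mul_comp_mul_left_iff hb hμb 2]

lemma exists_apply_mem_domain_iff (hA : IsWeightedDilation μ A b c)
    (hB : IsWeightedDilation μ B b' c') (hb : b ≠ 0) (hc : c ≠ 0)
    (hμb : MeasurePreserving (b * ·) μ μ) (f : Lp ℂ 2 μ) :
    (∃ hf : f ∈ A.domain, A ⟨f, hf⟩ ∈ B.domain) ↔
      MemLp (fun x : ℝ => (x : ℂ) ^ 2 * f x) 2 μ := by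
  simp only [hB.mem_domain_iff, hA.memLp_id_mul_apply_iff hb hc hμb]
  refine ⟨fun ⟨_, hf⟩ => hf, fun hf => ⟨?_, hf⟩⟩
  exact (hA.mem_domain_iff f).mpr (memLp_id_mul_of_memLp_sq_mul (Lp.memLp f) hf)

lemma apply_apply_ae_eq (hA : IsWeightedDilation μ A b c) (hB : IsWeightedDilation μ B b' c')
    (hμb : MeasurePreserving (b * ·) μ μ) (f : Lp ℂ 2 μ) (hf : f ∈ B.domain)
    (hBf : B ⟨f, hf⟩ ∈ A.domain) :
    ⇑(A ⟨B ⟨f, hf⟩, hBf⟩) =ᵐ[μ]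
      fun x : ℝ => (c * c' * b : ℂ) * (x : ℂ) ^ 2 * f (b' * (b * x)) := by
  have hBb := hμb.quasiMeasurePreserving.ae_eq (hB.apply_ae_eq ⟨f, hf⟩)
  filter_upwards [hA.apply_ae_eq ⟨_, hBf⟩, hBb] with x hAx hBx
  simp only [Function.comp_apply] at hBx
  rw [hAx, weightedDilation, hBx, weightedDilation]
  push_cast
  ring

theorem apply_apply_eq_sq_smul (hA : IsWeightedDilation μ A b c)
    (hB : IsWeightedDilation μ B b⁻¹ c') (hb : b ≠ 0) (hμb : MeasurePreserving (b * ·) μ μ)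
    (f : Lp ℂ 2 μ) (hf : f ∈ B.domain) (hBf : B ⟨f, hf⟩ ∈ A.domain) (hf' : f ∈ A.domain)
    (hAf : A ⟨f, hf'⟩ ∈ B.domain) :
    A ⟨B ⟨f, hf⟩, hBf⟩ = ((b : ℂ) ^ 2) • B ⟨A ⟨f, hf'⟩, hAf⟩ := by
  refine Lp.ext ?_
  filter_upwards [hA.apply_apply_ae_eq hB hμb f hf hBf,
    hB.apply_apply_ae_eq hA (measurePreserving_inv_mul_left hb hμb) f hf' hAf,
    Lp.coeFn_smul ((b : ℂ) ^ 2) (B ⟨A ⟨f, hf'⟩, hAf⟩)] with x hAB hBA hsmul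
  rw [hAB, hsmul, Pi.smul_apply, hBA, inv_mul_cancel_left₀ hb, mul_inv_cancel_left₀ hb,
    smul_eq_mul]
  push_cast
  field_simp

end IsWeightedDilation

theorem qNormal_model_closed_and_qnormal_general
    (q : ℝ) (hq0 : 0 < q)
    (μ : Measure ℝ) (hμneg : μ (Set.Iio 0) = 0)
    (hμinv : ∀ M : Set ℝ, MeasurableSet M → M ⊆ Set.Ici 0 → μ (q • M) = μ M)
    (ζ : Lp ℂ 2 μ →ₗ.[ℂ] Lp ℂ 2 μ)
    (hdense : Dense (ζ.domain : Set (Lp ℂ 2 μ)))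
    (hdom : ∀ f : Lp ℂ 2 μ,
      f ∈ ζ.domain ↔ ∫⁻ x, ENNReal.ofReal (x ^ 2 * ‖f x‖ ^ 2) ∂μ < ⊤)
    (hact : ∀ f : ζ.domain,
      (ζ f : ℝ → ℂ) =ᵐ[μ] fun x => ((q * x : ℝ) : ℂ) * (f : Lp ℂ 2 μ) (q * x)) :
    ζ.IsClosed ∧
    (∀ f : Lp ℂ 2 μ,
      ((∃ hf : f ∈ ζ.adjoint.domain, ζ.adjoint ⟨f, hf⟩ ∈ ζ.domain) ↔
        ∫⁻ x, ENNReal.ofReal (x ^ 4 * ‖f x‖ ^ 2) ∂μ < ⊤) ∧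
      ((∃ hf : f ∈ ζ.domain, ζ ⟨f, hf⟩ ∈ ζ.adjoint.domain) ↔
        ∫⁻ x, ENNReal.ofReal (x ^ 4 * ‖f x‖ ^ 2) ∂μ < ⊤)) ∧
    (∀ (f : Lp ℂ 2 μ) (hf1 : f ∈ ζ.adjoint.domain)
        (hf2 : ζ.adjoint ⟨f, hf1⟩ ∈ ζ.domain)
        (hg1 : f ∈ ζ.domain) (hg2 : ζ ⟨f, hg1⟩ ∈ ζ.adjoint.domain),
      ζ ⟨ζ.adjoint ⟨f, hf1⟩, hf2⟩
        = ((q : ℂ) ^ 2) • ζ.adjoint ⟨ζ ⟨f, hg1⟩, hg2⟩) := by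
  have hq : q ≠ 0 := hq0.ne'
  have hμq' := measurePreserving_inv_mul_left_of_smul_invariant hq0 hμneg hμinv
  have hμq : MeasurePreserving (q * ·) μ μ := by
    simpa using measurePreserving_inv_mul_left (inv_ne_zero hq) hμq'
  have hζ : IsWeightedDilation μ ζ q q :=
    ⟨fun f => by simpa [← hdom] using (memLp_pow_mul_iff_lintegral_lt_top f 1).symm, hact⟩
  have hζ' := hζ.adjoint hq hq hμq hdense
  have hquartic (f : Lp ℂ 2 μ) : ∫⁻ x, ENNReal.ofReal (x ^ 4 * ‖f x‖ ^ 2) ∂μ < ⊤ ↔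
      MemLp (fun x : ℝ => (x : ℂ) ^ 2 * f x) 2 μ :=
    (memLp_pow_mul_iff_lintegral_lt_top f 2).symm
  refine ⟨hζ.isClosed hq hq hμq hdense, fun f => ⟨?_, ?_⟩,
    hζ.apply_apply_eq_sq_smul hζ' hq hμq⟩
  · rw [hquartic]
    exact hζ'.exists_apply_mem_domain_iff hζ (inv_ne_zero hq)
      (mul_ne_zero hq (inv_ne_zero hq)) hμq' f
  · rw [hquartic]
    exact hζ.exists_apply_mem_domain_iff hζ' hq hq hμq f

/-- The model operator `(ζ f)(x) = q x f(qx)` is closed and `q`-normal: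
`ζ ζ* = q² ζ* ζ`, with `D(ζζ*) = D(ζ*ζ) = {f : ∫ x⁴|f|² dμ < ∞}` and
`ζ(ζ* f) = q² ζ*(ζ f)` on this common domain. -/
theorem qNormal_model_closed_and_qnormal
    (q : ℝ) (hq0 : 0 < q) (hq1 : q < 1)
    (μ : Measure ℝ) (hμneg : μ (Set.Iio 0) = 0)
    (hμinv : ∀ M : Set ℝ, MeasurableSet M → M ⊆ Set.Ici 0 → μ (q • M) = μ M)
    (ζ : Lp ℂ 2 μ →ₗ.[ℂ] Lp ℂ 2 μ)
    (hdense : Dense (ζ.domain : Set (Lp ℂ 2 μ)))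
    (hdom : ∀ f : Lp ℂ 2 μ,
      f ∈ ζ.domain ↔ ∫⁻ x, ENNReal.ofReal (x ^ 2 * ‖f x‖ ^ 2) ∂μ < ⊤)
    (hact : ∀ f : ζ.domain,
      (ζ f : ℝ → ℂ) =ᵐ[μ] fun x => ((q * x : ℝ) : ℂ) * (f : Lp ℂ 2 μ) (q * x)) :
    ζ.IsClosed ∧
    (∀ f : Lp ℂ 2 μ,
      ((∃ hf : f ∈ ζ.adjoint.domain, ζ.adjoint ⟨f, hf⟩ ∈ ζ.domain) ↔
        ∫⁻ x, ENNReal.ofReal (x ^ 4 * ‖f x‖ ^ 2) ∂μ < ⊤) ∧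
      ((∃ hf : f ∈ ζ.domain, ζ ⟨f, hf⟩ ∈ ζ.adjoint.domain) ↔
        ∫⁻ x, ENNReal.ofReal (x ^ 4 * ‖f x‖ ^ 2) ∂μ < ⊤)) ∧
    (∀ (f : Lp ℂ 2 μ) (hf1 : f ∈ ζ.adjoint.domain)
        (hf2 : ζ.adjoint ⟨f, hf1⟩ ∈ ζ.domain)
        (hg1 : f ∈ ζ.domain) (hg2 : ζ ⟨f, hg1⟩ ∈ ζ.adjoint.domain),
      ζ ⟨ζ.adjoint ⟨f, hf1⟩, hf2⟩
        = ((q : ℂ) ^ 2) • ζ.adjoint ⟨ζ ⟨f, hg1⟩, hg2⟩) :=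
  qNormal_model_closed_and_qnormal_general q hq0 μ hμneg hμinv ζ hdense hdom hact
end

section
/- For k ∈ ℤ and f ∈ C₀([0,∞), ℂ) with f(0) = 0 whenever k ≠ 0, define g_{f,k} : ℂ → ℂ by g_{f,k}(w) = f(|w|)·(w/|w|)^{k} for w ≠ 0, g_{f,0}(0) = f(0), and g_{f,k}(0) = 0 for k ≠ 0 (so that g_{f,k} is continuous on ℂ and vanishes at infinity). Then the linear span of the functions g_{f,k}, over all k ∈ ℤ and all admissible f, is a star-subalgebra of C₀(ℂ, ℂ) that separates the points of ℂ and is dense in C₀(ℂ, ℂ) in the supremum norm. -/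
open Filter
open scoped ZeroAtInfty

/-- The set of functions `g_{f,k}(w) = f(|w|) (w/|w|)^k` in `C₀(ℂ)`, where `k ∈ ℤ` and
`f ∈ C₀([0,∞))` with `f(0) = 0` whenever `k ≠ 0`. -/
def polarGenerators : Set C₀(ℂ, ℂ) :=
  {g | ∃ (k : ℤ) (f : ℝ → ℂ), Continuous f ∧ Tendsto f atTop (nhds 0) ∧
    (k ≠ 0 → f 0 = 0) ∧
    ∀ w : ℂ, g w = if w = 0 then (if k = 0 then f 0 else 0)
      else f ‖w‖ * (w / (‖w‖ : ℂ)) ^ k}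

/-!
The generators are closed under products, `(k, f), (k', f') ↦ (k + k', f f')`, and under the
star, `(k, f) ↦ (-k, f̄)`, so their span is the non-unital star subalgebra they generate. Already
`e^{-|w|}` and `w e^{-|w|}` separate the points of `ℂ`, and the first vanishes nowhere.

Density is Stone–Weierstrass for `C₀(X)`, reduced to the compact case on the one-point
compactification: after adjoining the constants, an approximation `c + a` of a function vanishing
at `∞` has `|c|` at most the error, so `a` alone approximates it to within twice the error.
-/

open scoped Topology OnePoint

theorem NonUnitalStarAlgebra.adjoin_toSubmodule_eq_span_of_mul_mem_of_star_mem
    {R A : Type*} [CommSemiring R] [StarRing R] [NonUnitalSemiring A] [StarRing A] [Module R A]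
    [IsScalarTower R A A] [SMulCommClass R A A] [StarModule R A] {s : Set A}
    (hmul : ∀ a ∈ s, ∀ b ∈ s, a * b ∈ s) (hstar : ∀ a ∈ s, star a ∈ s) :
    (adjoin R s).toSubmodule = Submodule.span R s := by
  have hclosure : (Subsemigroup.closure (s ∪ star s) : Set A) = s := by
    rw [Set.union_eq_left.2 fun a ha => by simpa using hstar _ ha]
    exact congrArg SetLike.coe (Subsemigroup.closure_eq ⟨s, fun ha hb => hmul _ ha _ hb⟩)
  rw [adjoin_eq_span, hclosure]

namespace ZeroAtInftyContinuousMap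

variable {X 𝕜 : Type*} [TopologicalSpace X] [R1Space X] [RCLike 𝕜]

def toOnePoint : C₀(X, 𝕜) →⋆ₙₐ[𝕜] C(OnePoint X, 𝕜) where
  toFun f := OnePoint.continuousMapMk f 0 (by simpa using f.zero_at_infty')
  map_smul' c f := by ext x; induction x using OnePoint.rec <;> simp [OnePoint.continuousMapMk]
  map_zero' := by ext x; induction x using OnePoint.rec <;> simp [OnePoint.continuousMapMk]
  map_add' f g := by ext x; induction x using OnePoint.rec <;> simp [OnePoint.continuousMapMk]
  map_mul' f g := by ext x; induction x using OnePoint.rec <;> simp [OnePoint.continuousMapMk]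
  map_star' f := by ext x; induction x using OnePoint.rec <;> simp [OnePoint.continuousMapMk]

@[simp] lemma toOnePoint_coe (f : C₀(X, 𝕜)) (x : X) : toOnePoint f x = f x := rfl

@[simp] lemma toOnePoint_infty (f : C₀(X, 𝕜)) : toOnePoint f ∞ = 0 := rfl

lemma norm_le_two_mul_norm_toOnePoint_sub_algebraMap (f : C₀(X, 𝕜)) (c : 𝕜) :
    ‖f‖ ≤ 2 * ‖toOnePoint f - algebraMap 𝕜 C(OnePoint X, 𝕜) c‖ := by
  set g := toOnePoint f - algebraMap 𝕜 C(OnePoint X, 𝕜) c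
  have hc : ‖c‖ ≤ ‖g‖ := by
    simpa [g] using g.norm_coe_le_norm ∞
  rw [← norm_toBCF_eq_norm, BoundedContinuousFunction.norm_le (by positivity)]
  intro x
  calc ‖f x‖ = ‖g x + c‖ := by simp [g]
    _ ≤ ‖g‖ + ‖g‖ := norm_add_le_of_le (g.norm_coe_le_norm x) hc
    _ = 2 * ‖g‖ := by ring

lemma exists_eq_algebraMap_add_toOnePoint {A : NonUnitalStarSubalgebra 𝕜 C₀(X, 𝕜)}
    {b : C(OnePoint X, 𝕜)} (hb : b ∈ StarAlgebra.adjoin 𝕜 (A.map toOnePoint : Set _)) :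
    ∃ c : 𝕜, ∃ a ∈ A, b = algebraMap 𝕜 _ c + toOnePoint a := by
  have hb' : b ∈ (StarAlgebra.adjoin 𝕜 (A.map toOnePoint : Set _)).toSubalgebra.toSubmodule := hb
  rw [StarAlgebra.adjoin_nonUnitalStarSubalgebra_eq_span, Submodule.mem_sup] at hb'
  obtain ⟨_, hc, _, ⟨a, ha, rfl⟩, rfl⟩ := hb'
  obtain ⟨c, rfl⟩ := Submodule.mem_span_singleton.1 hc
  exact ⟨c, a, ha, by rw [Algebra.algebraMap_eq_smul_one]; rfl⟩

lemma separatesPoints_adjoin_map_toOnePoint {A : NonUnitalStarSubalgebra 𝕜 C₀(X, 𝕜)}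
    (hsep : ∀ x y : X, x ≠ y → ∃ f ∈ A, f x ≠ f y) (hne : ∀ x : X, ∃ f ∈ A, f x ≠ 0) :
    (StarAlgebra.adjoin 𝕜 (A.map toOnePoint : Set C(OnePoint X, 𝕜))).SeparatesPoints := by
  set B := StarAlgebra.adjoin 𝕜 (A.map toOnePoint : Set C(OnePoint X, 𝕜))
  have hmem {f : C₀(X, 𝕜)} (hf : f ∈ A) : ⇑(toOnePoint f) ∈ (⇑) '' (B : Set C(OnePoint X, 𝕜)) :=
    ⟨_, StarAlgebra.subset_adjoin 𝕜 _ ⟨f, hf, rfl⟩, rfl⟩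
  intro x y hxy
  induction x using OnePoint.rec <;> induction y using OnePoint.rec
  · exact absurd rfl hxy
  · obtain ⟨f, hf, hfy⟩ := hne _
    exact ⟨_, hmem hf, by simpa using hfy.symm⟩
  · obtain ⟨f, hf, hfx⟩ := hne _
    exact ⟨_, hmem hf, by simpa using hfx⟩
  · obtain ⟨f, hf, hfxy⟩ := hsep _ _ (fun h => hxy (congrArg _ h))
    exact ⟨_, hmem hf, by simpa using hfxy⟩

theorem dense_of_separatesPoints (A : NonUnitalStarSubalgebra 𝕜 C₀(X, 𝕜))
    (hsep : ∀ x y : X, x ≠ y → ∃ f ∈ A, f x ≠ f y) (hne : ∀ x : X, ∃ f ∈ A, f x ≠ 0) :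
    Dense (A : Set C₀(X, 𝕜)) := by
  set B := StarAlgebra.adjoin 𝕜 (A.map toOnePoint : Set C(OnePoint X, 𝕜))
  have hBdense := ContinuousMap.starSubalgebra_topologicalClosure_eq_top_of_separatesPoints B
    (separatesPoints_adjoin_map_toOnePoint hsep hne)
  intro f
  rw [Metric.mem_closure_iff]
  intro ε hε
  have hf : toOnePoint f ∈ closure (B : Set C(OnePoint X, 𝕜)) := by
    rw [← StarSubalgebra.topologicalClosure_coe, hBdense]; trivial
  obtain ⟨b, hb, hfb⟩ := Metric.mem_closure_iff.1 hf (ε / 2) (half_pos hε)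
  obtain ⟨c, a, ha, rfl⟩ := exists_eq_algebraMap_add_toOnePoint hb
  refine ⟨a, ha, ?_⟩
  calc dist f a ≤ 2 * ‖toOnePoint (f - a) - algebraMap 𝕜 _ c‖ := by
        rw [dist_eq_norm]; exact norm_le_two_mul_norm_toOnePoint_sub_algebraMap _ c
    _ = 2 * dist (toOnePoint f) (algebraMap 𝕜 _ c + toOnePoint a) := by
        rw [dist_eq_norm, map_sub, sub_sub, add_comm]
    _ < ε := by linarith

end ZeroAtInftyContinuousMap

lemma mem_polarGenerators_iff {g : C₀(ℂ, ℂ)} :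
    g ∈ polarGenerators ↔ ∃ (k : ℤ) (f : ℝ → ℂ), Continuous f ∧ Tendsto f atTop (𝓝 0) ∧
      (k ≠ 0 → f 0 = 0) ∧ g 0 = f 0 ∧ ∀ w ≠ 0, g w = f ‖w‖ * (w / ‖w‖) ^ k := by
  refine exists₂_congr fun k f => and_congr_right fun _ => and_congr_right fun _ =>
    and_congr_right fun hk => ⟨fun hg => ⟨?_, fun w hw => by simpa [hw] using hg w⟩, ?_⟩
  · by_cases k = 0 <;> simp_all
  · rintro ⟨hg0, hg⟩ w
    by_cases hw : w = 0
    · by_cases k = 0 <;> simp_all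
    · simpa [hw] using hg w hw

lemma Complex.conj_div_norm (w : ℂ) :
    starRingEnd ℂ (w / ‖w‖) = (w / ‖w‖)⁻¹ := by
  rcases eq_or_ne w 0 with rfl | hw
  · simp
  · exact (Complex.inv_eq_conj (by simp [hw])).symm

lemma mul_mem_polarGenerators {g g' : C₀(ℂ, ℂ)} (hg : g ∈ polarGenerators)
    (hg' : g' ∈ polarGenerators) : g * g' ∈ polarGenerators := by
  obtain ⟨k, f, hfc, hf, hfk, hg0, hg⟩ := mem_polarGenerators_iff.1 hg
  obtain ⟨k', f', hfc', hf', hfk', hg0', hg'⟩ := mem_polarGenerators_iff.1 hg'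
  refine mem_polarGenerators_iff.2 ⟨k + k', fun r => f r * f' r, hfc.mul hfc',
    by simpa using hf.mul hf', fun hkk => ?_, by simp [hg0, hg0'], fun w hw => ?_⟩
  · obtain hk | hk' : k ≠ 0 ∨ k' ≠ 0 := by omega
    · simp [hfk hk]
    · simp [hfk' hk']
  · have hu : w / ‖w‖ ≠ 0 := div_ne_zero hw (by simpa using hw)
    simp only [ZeroAtInftyContinuousMap.coe_mul, Pi.mul_apply, hg w hw, hg' w hw, zpow_add₀ hu]
    ring

lemma star_mem_polarGenerators {g : C₀(ℂ, ℂ)} (hg : g ∈ polarGenerators) :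
    star g ∈ polarGenerators := by
  obtain ⟨k, f, hfc, hf, hfk, hg0, hg⟩ := mem_polarGenerators_iff.1 hg
  refine mem_polarGenerators_iff.2 ⟨-k, starRingEnd ℂ ∘ f,
    Complex.continuous_conj.comp hfc, by simpa using (Complex.continuous_conj.tendsto 0).comp hf,
    fun hk => by simp [hfk (neg_ne_zero.1 hk)], by simp [hg0], fun w hw => ?_⟩
  simp only [ZeroAtInftyContinuousMap.coe_star, Pi.star_apply, hg w hw, Complex.star_def, map_mul,
    map_zpow₀, Complex.conj_div_norm, inv_zpow', Function.comp_apply]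

noncomputable def powMulExpNegNorm (n : ℕ) : C₀(ℂ, ℂ) where
  toFun w := w ^ n * Real.exp (-‖w‖)
  continuous_toFun := by fun_prop
  zero_at_infty' := by
    rw [tendsto_zero_iff_norm_tendsto_zero]
    simpa [Function.comp_def, Complex.norm_exp] using
      (Real.tendsto_pow_mul_exp_neg_atTop_nhds_zero n).comp
        (tendsto_norm_cocompact_atTop (E := ℂ))

@[simp] lemma powMulExpNegNorm_apply (n : ℕ) (w : ℂ) :
    powMulExpNegNorm n w = w ^ n * Real.exp (-‖w‖) := rfl

lemma powMulExpNegNorm_mem_polarGenerators (n : ℕ) : powMulExpNegNorm n ∈ polarGenerators := by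
  refine mem_polarGenerators_iff.2 ⟨n, fun r => ((r ^ n * Real.exp (-r) : ℝ) : ℂ), by fun_prop,
    (Complex.continuous_ofReal.tendsto 0).comp (Real.tendsto_pow_mul_exp_neg_atTop_nhds_zero n),
    fun hn => by simp [zero_pow (by exact_mod_cast hn : n ≠ 0)], by simp, fun w hw => ?_⟩
  have : (‖w‖ : ℂ) ≠ 0 := by simpa using hw
  simp only [powMulExpNegNorm_apply, zpow_natCast, div_pow, Complex.ofReal_mul, Complex.ofReal_pow]
  field_simp

lemma exists_mem_polarGenerators_apply_ne {w₁ w₂ : ℂ} (h : w₁ ≠ w₂) :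
    ∃ g ∈ polarGenerators, g w₁ ≠ g w₂ := by
  by_cases hnorm : ‖w₁‖ = ‖w₂‖
  · refine ⟨_, powMulExpNegNorm_mem_polarGenerators 1, ?_⟩
    simpa [hnorm, Complex.exp_ne_zero] using h
  · refine ⟨_, powMulExpNegNorm_mem_polarGenerators 0, ?_⟩
    simpa only [powMulExpNegNorm_apply, pow_zero, one_mul, ne_eq, Complex.ofReal_inj,
      Real.exp_eq_exp, neg_inj] using hnorm

/-- The linear span of the functions `g_{f,k}` is a star-subalgebra of `C₀(ℂ, ℂ)` that
separates the points of `ℂ` and is dense in `C₀(ℂ, ℂ)`. -/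
theorem polarGenerators_span_dense :
    (∀ a b : C₀(ℂ, ℂ), a ∈ Submodule.span ℂ polarGenerators →
      b ∈ Submodule.span ℂ polarGenerators → a * b ∈ Submodule.span ℂ polarGenerators) ∧
    (∀ a : C₀(ℂ, ℂ), a ∈ Submodule.span ℂ polarGenerators →
      star a ∈ Submodule.span ℂ polarGenerators) ∧
    (∀ w₁ w₂ : ℂ, w₁ ≠ w₂ →
      ∃ g ∈ Submodule.span ℂ polarGenerators, g w₁ ≠ g w₂) ∧
    Dense ((Submodule.span ℂ polarGenerators : Submodule ℂ C₀(ℂ, ℂ)) : Set C₀(ℂ, ℂ)) := by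
  set A := NonUnitalStarAlgebra.adjoin ℂ polarGenerators
  have hA : Submodule.span ℂ polarGenerators = A.toSubmodule :=
    (NonUnitalStarAlgebra.adjoin_toSubmodule_eq_span_of_mul_mem_of_star_mem
      (fun _ ha _ hb => mul_mem_polarGenerators ha hb) fun _ => star_mem_polarGenerators).symm
  have hsep (w₁ w₂ : ℂ) (h : w₁ ≠ w₂) : ∃ g ∈ A, g w₁ ≠ g w₂ := by
    obtain ⟨g, hg, hne⟩ := exists_mem_polarGenerators_apply_ne h
    exact ⟨g, NonUnitalStarAlgebra.subset_adjoin ℂ _ hg, hne⟩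
  have hne (w : ℂ) : ∃ g ∈ A, g w ≠ 0 :=
    ⟨_, NonUnitalStarAlgebra.subset_adjoin ℂ _ (powMulExpNegNorm_mem_polarGenerators 0),
      by simp [Complex.exp_ne_zero]⟩
  rw [hA]
  exact ⟨fun _ _ => A.mul_mem, fun _ => star_mem (s := A), hsep,
    ZeroAtInftyContinuousMap.dense_of_separatesPoints A hsep hne⟩
end
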